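/- (Limited angle uniqueness / Remark B) Let W be bounded continuous satisfying W(x,θ) − w₀(x) = w₀(x) − W(x,−θ) with w₀ nowhere vanishing, let S₊ ⊂ S¹ be a nonempty open arc and S₋ = −S₊. If f is continuous with compact support and P_W f(s,θ) = 0 for all s ∈ ℝ and all θ ∈ S₊ ∪ S₋, then f ≡ 0 on ℝ². -/

import Mathlib

open MeasureTheory Real Filter

noncomputable section

/-- The plane `ℝ²` with the Euclidean norm. -/
abbrev R2 : Type := EuclideanSpace ℝ (Fin 2)

/-- The unit circle `S¹ ⊂ ℝ²`. -/
def S1 : Set R2 := Metric.sphere (0 : R2) 1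

/-- The unit vector `(cos φ, sin φ)`, used to parametrize `S¹` by arc length. -/
def dir (φ : ℝ) : R2 := (WithLp.equiv 2 (Fin 2 → ℝ)).symm ![Real.cos φ, Real.sin φ]

/-- `θ^⊥ = (-θ₂, θ₁)`, the rotation of `θ` by `π/2`. -/
def perp (θ : R2) : R2 := (WithLp.equiv 2 (Fin 2 → ℝ)).symm ![-(θ 1), θ 0]

/-- The weighted ray transform `P_W f (s, θ) = ∫_ℝ W(sθ^⊥ + tθ, θ) f(sθ^⊥ + tθ) dt`. -/
def rayT (W : R2 → R2 → ℂ) (f : R2 → ℂ) (s : ℝ) (θ : R2) : ℂ :=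
  ∫ t : ℝ, W (s • perp θ + t • θ) θ * f (s • perp θ + t • θ)

/-- The angular average `w₀(x) = (1/2π) ∫_{S¹} W(x,θ) dθ`, with `S¹` parametrized by
arc length as `φ ↦ (cos φ, sin φ)`, `φ ∈ [0, 2π]`. -/
def w0 (W : R2 → R2 → ℂ) (x : R2) : ℂ :=
  ((2 * Real.pi)⁻¹ : ℝ) • ∫ φ in (0:ℝ)..(2 * Real.pi), W x (dir φ)

/-- The principal value integral `p.v. ∫_ℝ q(t)/(s-t) dt`. -/
def pvInt (q : ℝ → ℂ) (s : ℝ) : ℂ :=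
  limUnder (nhdsWithin (0:ℝ) (Set.Ioi 0))
    (fun ε => ∫ t in {t : ℝ | ε < |s - t|}, q t / ((s : ℂ) - (t : ℂ)))

/-- The Hilbert transform `(1/π) p.v. ∫_ℝ q(t)/(s-t) dt`. -/
def hilbertT (q : ℝ → ℂ) (s : ℝ) : ℂ := ((Real.pi)⁻¹ : ℝ) • pvInt q s

/-- A smooth compactly supported (real-valued) test function on `ℝ²`. -/
def IsTestFun (φ : R2 → ℝ) : Prop := ContDiff ℝ (⊤ : ℕ∞) φ ∧ HasCompactSupport φ

/-! ### Auxiliary material -/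

open FourierTransform
open scoped RealInnerProductSpace

lemma S1_sq {θ : R2} (hθ : θ ∈ S1) : θ 0 ^2 + θ 1 ^2 = 1 := by
  have : ‖θ‖ = 1 := by simpa [S1] using hθ
  rw [EuclideanSpace.norm_eq] at this
  have := congrArg (· ^ 2) this
  simpa [Fin.sum_univ_two, Real.sq_sqrt, add_nonneg, sq_nonneg] using this

lemma orth {θ : R2} (hθ : θ ∈ S1) : Orthonormal ℝ (![perp θ, θ]) := by
  have h := S1_sq hθ
  rw [orthonormal_iff_ite]
  intro i j
  fin_cases i <;> fin_cases j <;>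
    simp [PiLp.inner_apply, Fin.sum_univ_two, perp, real_inner_comm, -inner_self_eq_norm_sq_to_K] <;> ring_nf <;>
    nlinarith [h]

/-- The orthonormal basis `(θ^⊥, θ)` of `ℝ²`, for `θ ∈ S¹`. -/
def onb {θ : R2} (hθ : θ ∈ S1) : OrthonormalBasis (Fin 2) ℝ R2 :=
  (basisOfOrthonormalOfCardEqFinrank (orth hθ)
    (by simp [finrank_euclideanSpace_fin])).toOrthonormalBasis
    (by rw [coe_basisOfOrthonormalOfCardEqFinrank]; exact orth hθ)

lemma onb_apply {θ : R2} (hθ : θ ∈ S1) (i : Fin 2) : onb hθ i = ![perp θ, θ] i := by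
  rw [onb, Module.Basis.coe_toOrthonormalBasis, coe_basisOfOrthonormalOfCardEqFinrank]

/-- The rotation of the plane sending `(1,0)` to `θ^⊥` and `(0,1)` to `θ`. -/
def rot {θ : R2} (hθ : θ ∈ S1) : R2 ≃ₗᵢ[ℝ] R2 := (onb hθ).repr.symm

lemma rot_apply {θ : R2} (hθ : θ ∈ S1) (y : R2) :
    rot hθ y = y 0 • perp θ + y 1 • θ := by
  have h1 : (onb hθ).repr ((onb hθ).repr.symm y) = y := (onb hθ).repr.apply_symm_apply y
  have := (onb hθ).sum_repr ((onb hθ).repr.symm y)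
  rw [h1, Fin.sum_univ_two, onb_apply, onb_apply] at this
  simpa [rot] using this.symm

/-- `(Fin 2 → ℝ)` is homeomorphic to `ℝ²` (it is the same space with another norm). -/
def piLpHomeo : (Fin 2 → ℝ) ≃ₜ R2 :=
  { toEquiv := (WithLp.equiv 2 (Fin 2 → ℝ)).symm,
    continuous_toFun := PiLp.continuous_toLp _ _,
    continuous_invFun := PiLp.continuous_ofLp _ _ }

/-- The canonical (measure preserving) homeomorphism `ℝ × ℝ ≃ ℝ²`. -/
def prodHomeo : (ℝ × ℝ) ≃ₜ R2 := (Homeomorph.finTwoArrow).symm.trans piLpHomeo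

lemma prodHomeo_mp : MeasurePreserving prodHomeo volume volume := by
  have h := ((EuclideanSpace.volume_preserving_symm_measurableEquiv_toLp (Fin 2)).symm).comp
    ((volume_preserving_finTwoArrow ℝ).symm)
  exact h

lemma prodHomeo_apply_zero (p : ℝ × ℝ) : (prodHomeo p : R2) 0 = p.1 := rfl
lemma prodHomeo_apply_one (p : ℝ × ℝ) : (prodHomeo p : R2) 1 = p.2 := rfl

/-- **Fourier slice theorem** (vanishing version): if all line integrals of `g` in
direction `θ` vanish, then the Fourier transform of `g` vanishes on the line `ℝ θ^⊥`. -/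
lemma sliceZero {θ : R2} (hθ : θ ∈ S1) (g : R2 → ℂ) (hg : Continuous g)
    (hgc : HasCompactSupport g)
    (hz : ∀ s : ℝ, (∫ t : ℝ, g (s • perp θ + t • θ)) = 0) (σ : ℝ) :
    𝓕 g (σ • perp θ) = 0 := by
  classical
  set e := rot hθ with he
  have hw : e (σ • EuclideanSpace.single 0 1) = σ • perp θ := by
    rw [he, rot_apply]
    simp [EuclideanSpace.single_apply]
  rw [← hw, ← Real.fourier_comp_linearIsometry e g]
  rw [Real.fourier_eq']
  set F : R2 → ℂ := fun v =>
    Complex.exp (↑(-2 * π * ⟪v, σ • EuclideanSpace.single 0 1⟫) * Complex.I) • (g ∘ e) v with hF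
  have hinner : ∀ v : R2, ⟪v, (σ • EuclideanSpace.single 0 1 : R2)⟫ = σ * v 0 := by
    intro v
    simp [PiLp.inner_apply, Fin.sum_univ_two, EuclideanSpace.single_apply]
  have hcov : (∫ v, F v) = ∫ p : ℝ × ℝ, F (prodHomeo p) :=
    (prodHomeo_mp.integral_comp prodHomeo.measurableEmbedding F).symm
  have hFp : ∀ p : ℝ × ℝ,
      F (prodHomeo p) = Complex.exp (↑(-2 * π * (σ * p.1)) * Complex.I) •
        g (p.1 • perp θ + p.2 • θ) := by
    intro p
    rw [hF]
    simp only [Function.comp_apply, hinner, prodHomeo_apply_zero]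
    congr 1
    rw [he, rot_apply, prodHomeo_apply_zero, prodHomeo_apply_one]
  have hcont : Continuous fun p : ℝ × ℝ => F (prodHomeo p) := by
    simp only [hFp]
    apply Continuous.fun_smul
    · fun_prop
    · exact hg.comp (by fun_prop)
  have hHeq : ∀ p : ℝ × ℝ, (prodHomeo.trans e.toHomeomorph) p
      = p.1 • perp θ + p.2 • θ := by
    intro p
    show e (prodHomeo p) = _
    rw [he, rot_apply, prodHomeo_apply_zero, prodHomeo_apply_one]
  set c : ℝ × ℝ → ℂ := fun p => Complex.exp (↑(-2 * π * (σ * p.1)) * Complex.I) with hc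
  have heq : (fun p : ℝ × ℝ => F (prodHomeo p))
      = c • (g ∘ ⇑(prodHomeo.trans e.toHomeomorph)) := by
    funext p
    rw [hFp p]
    simp only [Pi.smul_apply', Function.comp_apply, hHeq p]
    rfl
  have hcs : HasCompactSupport fun p : ℝ × ℝ => F (prodHomeo p) := by
    rw [heq]; exact (hgc.comp_homeomorph _).smul_left
  have hint : Integrable (fun p : ℝ × ℝ => F (prodHomeo p)) volume :=
    hcont.integrable_of_hasCompactSupport hcs
  rw [hcov]
  rw [MeasureTheory.Measure.volume_eq_prod] at hint
  have : (∫ p : ℝ × ℝ, F (prodHomeo p)) = ∫ p : ℝ × ℝ, F (prodHomeo p) ∂(volume.prod volume) := by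
    rw [← MeasureTheory.Measure.volume_eq_prod]
  rw [this, MeasureTheory.integral_prod _ hint]
  have hin : ∀ s : ℝ, (∫ t : ℝ, F (prodHomeo (s, t))) = 0 := by
    intro s
    simp only [hFp]
    rw [MeasureTheory.integral_smul]
    rw [hz s, smul_zero]
  simp only [hin, integral_zero]

/-- The restriction of the Fourier transform of `g` to the complex line `ξ + ℂ ζ`. -/
def lineH (g : R2 → ℂ) (ξ ζ : R2) (z : ℂ) : ℂ :=
  ∫ v : R2, Complex.exp ((-2 * ↑π * Complex.I) * (↑(⟪v, ξ⟫) + z * ↑(⟪v, ζ⟫))) * g v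

lemma entire_lineH (g : R2 → ℂ) (hg : Continuous g) (hgc : HasCompactSupport g) (ξ ζ : R2) :
    Differentiable ℂ (lineH g ξ ζ) := by
  intro z₀
  set K : ℂ := -2 * ↑π * Complex.I with hK
  set a : R2 → ℝ := fun v => ⟪v, ξ⟫ with ha
  set b : R2 → ℝ := fun v => ⟪v, ζ⟫ with hb
  set F : ℂ → R2 → ℂ := fun z v => Complex.exp (K * (↑(a v) + z * ↑(b v))) * g v with hF
  set F' : ℂ → R2 → ℂ := fun z v =>
    Complex.exp (K * (↑(a v) + z * ↑(b v))) * (K * ↑(b v)) * g v with hF'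
  have hacont : Continuous a := by
    rw [ha]; exact continuous_id.inner continuous_const
  have hbcont : Continuous b := by
    rw [hb]; exact continuous_id.inner continuous_const
  have hFc : ∀ z, Continuous (F z) := by intro z; fun_prop
  have hF'c : Continuous (F' z₀) := by fun_prop
  set bound : R2 → ℝ := fun v =>
    (2 * π * |b v|) * Real.exp (2 * π * |b v| * (|z₀.im| + 1)) * ‖g v‖ with hbound
  have hboundc : Continuous bound := by fun_prop
  have hboundcs : HasCompactSupport bound := by
    apply HasCompactSupport.mul_left
    exact hgc.norm
  have key := hasDerivAt_integral_of_dominated_loc_of_deriv_le (F := F) (F' := F')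
    (bound := bound) (μ := (volume : Measure R2)) (x₀ := z₀) (Metric.ball_mem_nhds z₀ one_pos)
    (Eventually.of_forall fun z => (hFc z).aestronglyMeasurable)
    (((hFc z₀).integrable_of_hasCompactSupport (by
        apply HasCompactSupport.mul_left
        exact hgc)))
    hF'c.aestronglyMeasurable
    (ae_of_all _ ?_) (hboundc.integrable_of_hasCompactSupport hboundcs)
    (ae_of_all _ ?_)
  · exact ⟨_, key.2⟩
  · -- bound
    intro v z hz
    rw [hF']
    simp only [norm_mul, Complex.norm_exp]
    have h1 : (K * (↑(a v) + z * ↑(b v))).re = 2 * π * b v * z.im := by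
      simp [hK, Complex.mul_re, Complex.mul_im, Complex.add_re, Complex.add_im]
      ring
    have hKabs : ‖K‖ = 2 * π := by
      rw [hK]
      simp [map_mul, abs_of_nonneg pi_nonneg]
    rw [h1, hKabs, Complex.norm_real, Real.norm_eq_abs, hbound]
    have him : |z.im| ≤ |z₀.im| + 1 := by
      have := Complex.abs_im_le_norm (z - z₀)
      have h3 : ‖z - z₀‖ < 1 := by
        simpa [Metric.mem_ball, Complex.dist_eq] using hz
      have : |z.im - z₀.im| < 1 := by simpa [Complex.sub_im] using this.trans_lt h3
      have := abs_sub_abs_le_abs_sub z.im z₀.im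
      linarith [abs_sub_lt_iff.mp ‹|z.im - z₀.im| < 1›]
    have hexp : Real.exp (2 * π * b v * z.im) ≤ Real.exp (2 * π * |b v| * (|z₀.im| + 1)) := by
      apply Real.exp_le_exp.mpr
      calc 2 * π * b v * z.im ≤ |2 * π * b v * z.im| := le_abs_self _
        _ = 2 * π * |b v| * |z.im| := by
            rw [abs_mul, abs_mul, abs_mul]
            simp [abs_of_nonneg pi_nonneg]
        _ ≤ 2 * π * |b v| * (|z₀.im| + 1) := by
            apply mul_le_mul_of_nonneg_left him
            positivity
    have hfin := mul_le_mul_of_nonneg_right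
      (mul_le_mul_of_nonneg_left hexp (by positivity : (0:ℝ) ≤ 2 * π * |b v|))
      (norm_nonneg (g v))
    calc Real.exp (2 * π * b v * z.im) * (2 * π * |b v|) * ‖g v‖
        = 2 * π * |b v| * Real.exp (2 * π * b v * z.im) * ‖g v‖ := by
          ring
      _ ≤ 2 * π * |b v| * Real.exp (2 * π * |b v| * (|z₀.im| + 1)) * ‖g v‖ := hfin
  · -- differentiability
    intro v z _
    rw [hF, hF']
    have h1 : HasDerivAt (fun z : ℂ => K * (↑(a v) + z * ↑(b v))) (K * ↑(b v)) z := by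
      have : HasDerivAt (fun z : ℂ => (↑(a v) + z * ↑(b v))) (↑(b v)) z :=
        (hasDerivAt_mul_const _).const_add _
      simpa using this.const_mul K
    exact (h1.cexp.mul_const (g v))

lemma lineH_real (g : R2 → ℂ) (ξ ζ : R2) (t : ℝ) :
    lineH g ξ ζ (t : ℂ) = 𝓕 g (ξ + t • ζ) := by
  rw [Real.fourier_eq', lineH]
  congr 1
  funext v
  rw [smul_eq_mul]
  congr 1
  have h : ⟪v, ξ + t • ζ⟫ = ⟪v, ξ⟫ + t * ⟪v, ζ⟫ := by
    rw [inner_add_right, real_inner_smul_right]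
  rw [h]
  push_cast
  ring

/-- If the Fourier transform of a compactly supported continuous function vanishes on a
ball, it vanishes identically (analytic continuation along lines). -/
lemma fourier_zero_of_ball (g : R2 → ℂ) (hg : Continuous g) (hgc : HasCompactSupport g)
    (ξ₀ : R2) (ε : ℝ) (hε : 0 < ε)
    (hball : ∀ ξ ∈ Metric.ball ξ₀ ε, 𝓕 g ξ = 0) : ∀ ξ : R2, 𝓕 g ξ = 0 := by
  intro ξ
  set ζ : R2 := ξ - ξ₀ with hζ
  have hA : AnalyticOnNhd ℝ (fun t : ℝ => lineH g ξ₀ ζ (t : ℂ)) Set.univ := by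
    have h1 : AnalyticOnNhd ℂ (lineH g ξ₀ ζ) Set.univ :=
      (entire_lineH g hg hgc ξ₀ ζ).differentiableOn.analyticOnNhd isOpen_univ
    have h2 := h1.restrictScalars (𝕜 := ℝ)
    have h3 : AnalyticOnNhd ℝ (fun t : ℝ => (t : ℂ)) Set.univ := fun x _ =>
      Complex.ofRealCLM.analyticAt x
    exact h2.comp h3 (Set.mapsTo_univ _ _)
  have hδ : 0 < ε / (‖ζ‖ + 1) := by positivity
  have hev : (fun t : ℝ => lineH g ξ₀ ζ (t : ℂ)) =ᶠ[nhds (0 : ℝ)] 0 := by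
    filter_upwards [Metric.ball_mem_nhds (0 : ℝ) hδ] with t ht
    rw [lineH_real]
    apply hball
    rw [Metric.mem_ball, dist_eq_norm]
    have h1 : ξ₀ + t • ζ - ξ₀ = t • ζ := by abel
    rw [h1, norm_smul]
    have h2 : |t| < ε / (‖ζ‖ + 1) := by simpa [Real.dist_eq] using ht
    calc ‖t‖ * ‖ζ‖ ≤ |t| * (‖ζ‖ + 1) := by
          rw [Real.norm_eq_abs]
          exact mul_le_mul_of_nonneg_left (by linarith) (abs_nonneg t)
      _ < (ε / (‖ζ‖ + 1)) * (‖ζ‖ + 1) := by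
          apply mul_lt_mul_of_pos_right h2
          positivity
      _ = ε := by field_simp
  have := hA.eqOn_zero_of_preconnected_of_eventuallyEq_zero isPreconnected_univ
    (Set.mem_univ (0 : ℝ)) hev (Set.mem_univ (1 : ℝ))
  have h4 : lineH g ξ₀ ζ ((1 : ℝ) : ℂ) = 0 := this
  rw [lineH_real] at h4
  simpa [hζ] using h4

lemma perp_neg (θ : R2) : perp (-θ) = -perp θ := by
  ext i
  fin_cases i <;> simp [perp]

lemma perp_smul (c : ℝ) (θ : R2) : perp (c • θ) = c • perp θ := by
  ext i
  fin_cases i <;> simp [perp, mul_comm]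

/-- The inverse of `perp`. -/
def pinv (x : R2) : R2 := (WithLp.equiv 2 (Fin 2 → ℝ)).symm ![x 1, -(x 0)]

lemma perp_pinv (x : R2) : perp (pinv x) = x := by
  ext i
  fin_cases i <;> simp [perp, pinv]

lemma pinv_perp (θ : R2) : pinv (perp θ) = θ := by
  ext i
  fin_cases i <;> simp [perp, pinv]

lemma pinv_norm (x : R2) : ‖pinv x‖ = ‖x‖ := by
  rw [EuclideanSpace.norm_eq, EuclideanSpace.norm_eq]
  congr 1
  simp [Fin.sum_univ_two, pinv]
  ring

lemma perp_norm (x : R2) : ‖perp x‖ = ‖x‖ := by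
  rw [EuclideanSpace.norm_eq, EuclideanSpace.norm_eq]
  congr 1
  simp [Fin.sum_univ_two, perp]
  ring

lemma pinv_continuous : Continuous pinv := by
  apply (PiLp.continuous_toLp _ _).comp
  apply continuous_pi
  intro i
  fin_cases i
  · exact (continuous_apply (1 : Fin 2)).comp (PiLp.continuous_ofLp _ _)
  · exact ((continuous_apply (0 : Fin 2)).comp (PiLp.continuous_ofLp _ _)).neg

lemma dir_continuous : Continuous dir := by
  apply (PiLp.continuous_toLp _ _).comp
  apply continuous_pi
  intro i
  fin_cases i
  · simpa using Real.continuous_cos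
  · simpa using Real.continuous_sin

lemma w0_continuous (W : R2 → R2 → ℂ) (hWc : Continuous fun p : R2 × R2 => W p.1 p.2) :
    Continuous (w0 W) := by
  have h : Continuous (Function.uncurry fun (x : R2) (φ : ℝ) => W x (dir φ)) :=
    hWc.comp (continuous_fst.prodMk (dir_continuous.comp continuous_snd))
  have := intervalIntegral.continuous_parametric_intervalIntegral_of_continuous'
    (μ := (volume : Measure ℝ)) h 0 (2 * π)
  exact this.const_smul ((2 * π)⁻¹ : ℝ)

lemma supp_line {f : R2 → ℂ} (hfc : HasCompactSupport f) (c θ : R2) (hθ : ‖θ‖ = 1) :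
    HasCompactSupport fun t : ℝ => f (c + t • θ) := by
  obtain ⟨R, hR⟩ := hfc.isCompact.isBounded.subset_closedBall 0
  apply HasCompactSupport.intro (isCompact_Icc (a := -(R + ‖c‖)) (b := R + ‖c‖))
  intro t ht
  by_contra hne
  apply ht
  rw [Set.mem_Icc, ← abs_le]
  have hmem : c + t • θ ∈ tsupport f := subset_tsupport f hne
  have h1 : ‖c + t • θ‖ ≤ R := by simpa using hR hmem
  have h2 : ‖t • θ‖ ≤ R + ‖c‖ := by
    calc ‖t • θ‖ = ‖(c + t • θ) - c‖ := by congr 1; abel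
      _ ≤ ‖c + t • θ‖ + ‖c‖ := norm_sub_le _ _
      _ ≤ R + ‖c‖ := by linarith
  rwa [norm_smul, hθ, mul_one, Real.norm_eq_abs] at h2

/-- Limited angle uniqueness (Remark B): under the symmetry condition and `w₀ ≠ 0`,
if `P_W f(s,θ) = 0` for all `s ∈ ℝ` and all `θ ∈ S₊ ∪ S₋`, where `S₊` is a nonempty
open connected subset of `S¹` and `S₋ = -S₊`, then `f ≡ 0`. -/
theorem stmt15 (W : R2 → R2 → ℂ) (hWc : Continuous fun p : R2 × R2 => W p.1 p.2)
    (hWb : ∃ C, ∀ x θ, ‖W x θ‖ ≤ C)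
    (hw0 : ∀ x : R2, w0 W x ≠ 0)
    (hsym : ∀ x : R2, ∀ θ ∈ S1, W x θ - w0 W x = w0 W x - W x (-θ))
    (Splus : Set R2) (hsub : Splus ⊆ S1) (hne : Splus.Nonempty)
    (hopen : IsOpen ((Subtype.val ⁻¹' Splus : Set (Metric.sphere (0:R2) 1))))
    (hconn : IsConnected ((Subtype.val ⁻¹' Splus : Set (Metric.sphere (0:R2) 1))))
    (f : R2 → ℂ) (hf : Continuous f) (hfc : HasCompactSupport f)
    (hvan : ∀ s : ℝ, ∀ θ ∈ Splus ∪ (-Splus), rayT W f s θ = 0) :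
    ∀ x : R2, f x = 0 := by
  classical
  set g : R2 → ℂ := fun x => w0 W x * f x with hgdef
  have hg : Continuous g := (w0_continuous W hWc).mul hf
  have hgc : HasCompactSupport g := hfc.mul_left
  -- the symmetrized key identity
  have key : ∀ θ ∈ Splus, ∀ s : ℝ, (∫ t : ℝ, g (s • perp θ + t • θ)) = 0 := by
    intro θ hθ s
    have hθS1 : θ ∈ S1 := hsub hθ
    have hθn : ‖θ‖ = 1 := by simpa [S1] using hθS1
    have h1 : rayT W f s θ = 0 := hvan s θ (Or.inl hθ)
    have h2 : rayT W f (-s) (-θ) = 0 := hvan (-s) (-θ) (Or.inr (by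
      rw [Set.mem_neg, neg_neg]; exact hθ))
    rw [rayT] at h1 h2
    -- rewrite h2 as an integral in the original coordinates
    have e2 : ∀ t : ℝ, (-s) • perp (-θ) + t • (-θ) = s • perp θ + (-t) • θ := by
      intro t
      rw [perp_neg]
      module
    have hneg := MeasureTheory.integral_neg_eq_self
      (fun u : ℝ => W (s • perp θ + u • θ) (-θ) * f (s • perp θ + u • θ)) volume
    have hfun : (fun t : ℝ => W ((-s) • perp (-θ) + t • (-θ)) (-θ) *
          f ((-s) • perp (-θ) + t • (-θ)))
        = (fun t : ℝ => (fun u : ℝ =>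
            W (s • perp θ + u • θ) (-θ) * f (s • perp θ + u • θ)) (-t)) := by
      funext t
      simp only
      rw [e2 t]
    rw [hfun, hneg] at h2
    -- integrability of both pieces
    have hsupp1 : HasCompactSupport fun t : ℝ => f (s • perp θ + t • θ) :=
      supp_line hfc _ _ hθn
    have hline : Continuous fun t : ℝ => s • perp θ + t • θ := by fun_prop
    have hI1 : Integrable fun t : ℝ => W (s • perp θ + t • θ) θ * f (s • perp θ + t • θ) := by
      apply Continuous.integrable_of_hasCompactSupport
      · exact (hWc.comp (hline.prodMk continuous_const)).mul (hf.comp hline)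
      · exact hsupp1.mul_left
    have hI2 : Integrable fun t : ℝ =>
        W (s • perp θ + t • θ) (-θ) * f (s • perp θ + t • θ) := by
      apply Continuous.integrable_of_hasCompactSupport
      · exact (hWc.comp (hline.prodMk continuous_const)).mul (hf.comp hline)
      · exact hsupp1.mul_left
    have hsum : (∫ t : ℝ, (W (s • perp θ + t • θ) θ * f (s • perp θ + t • θ) +
        W (s • perp θ + t • θ) (-θ) * f (s • perp θ + t • θ))) = 0 := by
      rw [MeasureTheory.integral_add hI1 hI2, h1, h2, add_zero]
    have hpt : ∀ x : R2, W x θ * f x + W x (-θ) * f x = 2 * (w0 W x * f x) := by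
      intro x
      have := hsym x θ hθS1
      have hWsum : W x θ + W x (-θ) = 2 * w0 W x := by linear_combination this
      linear_combination f x * hWsum
    rw [show (fun t : ℝ => (W (s • perp θ + t • θ) θ * f (s • perp θ + t • θ) +
        W (s • perp θ + t • θ) (-θ) * f (s • perp θ + t • θ)))
        = fun t : ℝ => 2 * g (s • perp θ + t • θ) from funext fun t => hpt _] at hsum
    rw [MeasureTheory.integral_const_mul] at hsum
    simpa using hsum
  -- Fourier transform vanishes on rays over perp of Splus
  have hFslice : ∀ θ ∈ Splus, ∀ σ : ℝ, 𝓕 g (σ • perp θ) = 0 := fun θ hθ σ =>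
    sliceZero (hsub hθ) g hg hgc (key θ hθ) σ
  -- build an open set where the Fourier transform vanishes
  obtain ⟨O, hOopen, hOeq⟩ := isOpen_induced_iff.mp hopen
  have hOS1 : ∀ y : R2, y ∈ S1 → (y ∈ O ↔ y ∈ Splus) := by
    intro y hy
    have := Set.ext_iff.mp hOeq ⟨y, hy⟩
    simpa using this
  set U : Set R2 := {x : R2 | x ≠ 0} ∩ (fun x : R2 => ‖x‖⁻¹ • pinv x) ⁻¹' O with hU
  have hUopen : IsOpen U := by
    apply ContinuousOn.isOpen_inter_preimage _ _ hOopen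
    · exact (continuous_norm.continuousOn.inv₀ (fun x hx => by
        simpa [norm_ne_zero_iff] using hx)).smul pinv_continuous.continuousOn
    · exact isOpen_compl_singleton
  -- U is nonempty
  obtain ⟨θ₀, hθ₀⟩ := hne
  have hθ₀S1 : θ₀ ∈ S1 := hsub hθ₀
  have hθ₀n : ‖θ₀‖ = 1 := by simpa [S1] using hθ₀S1
  have hUne : perp θ₀ ∈ U := by
    constructor
    · intro h0
      have := perp_norm θ₀
      rw [h0, hθ₀n] at this
      simp at this
    · show ‖perp θ₀‖⁻¹ • pinv (perp θ₀) ∈ O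
      rw [perp_norm, hθ₀n, pinv_perp]
      simp only [inv_one, one_smul]
      exact (hOS1 θ₀ hθ₀S1).mpr hθ₀
  -- Fourier transform vanishes on U
  have hFU : ∀ x ∈ U, 𝓕 g x = 0 := by
    rintro x ⟨hx0, hxO⟩
    have hx0' : x ≠ 0 := hx0
    have hxn : ‖x‖ ≠ 0 := by simpa [norm_ne_zero_iff] using hx0'
    set θ : R2 := ‖x‖⁻¹ • pinv x with hθdef
    have hθS1 : θ ∈ S1 := by
      have : ‖θ‖ = 1 := by
        rw [hθdef, norm_smul, pinv_norm, norm_inv, norm_norm, inv_mul_cancel₀ hxn]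
      simpa [S1] using this
    have hθSplus : θ ∈ Splus := (hOS1 θ hθS1).mp hxO
    have hxeq : x = ‖x‖ • perp θ := by
      rw [hθdef, perp_smul, perp_pinv, smul_smul, mul_inv_cancel₀ hxn, one_smul]
    rw [hxeq]
    exact hFslice θ hθSplus ‖x‖
  -- hence it vanishes on a ball, hence everywhere
  obtain ⟨ε, hε, hball⟩ := Metric.isOpen_iff.mp hUopen _ hUne
  have hFzero : ∀ ξ : R2, 𝓕 g ξ = 0 :=
    fourier_zero_of_ball g hg hgc (perp θ₀) ε hε (fun ξ hξ => hFU ξ (hball hξ))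
  have hgint : Integrable g := hg.integrable_of_hasCompactSupport hgc
  have hFg0 : 𝓕 g = 0 := funext hFzero
  have hFint : Integrable (𝓕 g) := by rw [hFg0]; exact integrable_zero _ _ _
  have hinv := hg.fourierInv_fourier_eq hgint hFint
  have hgz : ∀ x : R2, g x = 0 := by
    intro x
    rw [← hinv, hFg0]
    simp [Real.fourierInv_eq]
  intro x
  rcases mul_eq_zero.mp (hgz x) with h | h
  · exact absurd h (hw0 x)
  · exact h
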